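/- Program extraction: for every stable function f : El(Nat) → El(Nat) there exists a unique g : ℕ → ℕ such that ⊨ ∀x ∈ ℕ, E(x,x) ⇒ |f(el_Nat(x)) =_{El(Nat)} el_Nat(g(x))|, and moreover g is computable (partial recursive and total). -/

import Mathlib

open Nat.Partrec (Code)

/-- `φ_e(n)` : evaluation of the `e`-th partial recursive function. -/
def Phi (e n : ℕ) : Part ℕ := (Denumerable.ofNat Code e).eval n

/-- Realisability implication. -/
def rImp (F G : Set ℕ) : Set ℕ := {e | ∀ n ∈ F, ∃ m ∈ G, m ∈ Phi e n}

/-- Realisability conjunction via pairing. -/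
def rAnd (F G : Set ℕ) : Set ℕ := {k | ∃ n ∈ F, ∃ m ∈ G, k = Nat.pair n m}

/-- Realisability bi-implication. -/
def rIff (F G : Set ℕ) : Set ℕ := rAnd (rImp F G) (rImp G F)

/-- Realisability universal quantification (intersection). -/
def rAll {X : Type} (H : X → Set ℕ) : Set ℕ := ⋂ x, H x

/-- Realisability existential quantification (union). -/
def rEx {X : Type} (H : X → Set ℕ) : Set ℕ := ⋃ x, H x

/-- Realisability symmetry of a relation. -/
def IsSymm' {X : Type} (eqX : X → X → Set ℕ) : Prop :=
  (rAll fun x => rAll fun y => rImp (eqX x y) (eqX y x)).Nonempty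

/-- Realisability transitivity of a relation. -/
def IsTrans' {X : Type} (eqX : X → X → Set ℕ) : Prop :=
  (rAll fun x => rAll fun y => rAll fun z =>
    rImp (eqX x y) (rImp (eqX y z) (eqX x z))).Nonempty

/-- `eqX` makes its carrier an effective set. -/
def IsEff {X : Type} (eqX : X → X → Set ℕ) : Prop := IsSymm' eqX ∧ IsTrans' eqX

/-- Equality of `El(X)` : stability ∧ unicity ∧ existence ∧ equivalence. -/
def elEq {X : Type} (eqX : X → X → Set ℕ) (u v : X → Set ℕ) : Set ℕ :=
  rAnd (rAll fun x => rAll fun x' => rImp (u x) (rImp (eqX x x') (u x')))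
    (rAnd (rAll fun x => rAll fun x' => rImp (u x) (rImp (u x') (eqX x x')))
      (rAnd (rEx fun x => u x)
        (rAll fun x => rIff (u x) (v x))))

/-- Injection from the low level to the high level. -/
def el {X : Type} (eqX : X → X → Set ℕ) (x : X) : X → Set ℕ := fun y => eqX x y

/-- Realisability equality on the natural numbers. -/
def E (n m : ℕ) : Set ℕ := if n = m then ({n} : Set ℕ) else ∅

section ProgExtractAux

open Nat.Partrec.Code Encodable Denumerable

namespace ProgExtract

lemma mem_E {k x y : ℕ} : k ∈ E x y ↔ x = y ∧ k = x := by
  unfold E; split_ifs with h <;> simp [h]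

lemma E_self (x : ℕ) : x ∈ E x x := mem_E.2 ⟨rfl, rfl⟩

lemma Phi_encode (c : Nat.Partrec.Code) (n : ℕ) : Phi (encode c) n = c.eval n := by
  simp [Phi]

lemma rImp_intro {e : ℕ} {A B : Set ℕ} (h : ∀ n ∈ A, ∃ m ∈ B, m ∈ Phi e n) :
    e ∈ rImp A B := h

lemma rImp_elim {e : ℕ} {A B : Set ℕ} (h : e ∈ rImp A B) {n : ℕ} (hn : n ∈ A) :
    ∃ m ∈ B, m ∈ Phi e n := h n hn

lemma mem_rAll {X : Type} {H : X → Set ℕ} {e : ℕ} : e ∈ rAll H ↔ ∀ x, e ∈ H x :=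
  Set.mem_iInter

lemma rAnd_intro {A B : Set ℕ} {n m : ℕ} (hn : n ∈ A) (hm : m ∈ B) :
    Nat.pair n m ∈ rAnd A B := ⟨n, hn, m, hm, rfl⟩

lemma rAnd_unpair {A B : Set ℕ} {k : ℕ} (h : k ∈ rAnd A B) :
    k.unpair.1 ∈ A ∧ k.unpair.2 ∈ B := by
  obtain ⟨n, hn, m, hm, rfl⟩ := h
  simpa [Nat.unpair_pair] using ⟨hn, hm⟩

lemma elEq_decomp {X : Type} {eqX : X → X → Set ℕ} {u v : X → Set ℕ} {m : ℕ}
    (h : m ∈ elEq eqX u v) :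
    m.unpair.2.unpair.1 ∈
      (rAll fun x => rAll fun x' => rImp (u x) (rImp (u x') (eqX x x'))) ∧
    m.unpair.2.unpair.2.unpair.1 ∈ rEx (fun x => u x) ∧
    m.unpair.2.unpair.2.unpair.2 ∈ (rAll fun x => rIff (u x) (v x)) := by
  obtain ⟨h1, h2⟩ := rAnd_unpair h
  obtain ⟨h3, h4⟩ := rAnd_unpair h2
  obtain ⟨h5, h6⟩ := rAnd_unpair h4
  exact ⟨h3, h5, h6⟩

lemma exists_k1 : ∃ k1 : ℕ, ∀ n : ℕ,
    Phi k1 n = Part.some (encode (Nat.Partrec.Code.const n)) := by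
  have hc : Computable fun n : ℕ => encode (Nat.Partrec.Code.const n) :=
    (Primrec.encode.comp primrec_const).to_comp
  obtain ⟨c, hc'⟩ := exists_code.1 (Partrec.nat_iff.1 hc)
  refine ⟨encode c, fun n => ?_⟩
  rw [Phi_encode, hc']; rfl

lemma k1_stab {k1 : ℕ}
    (hk1 : ∀ n : ℕ, Phi k1 n = Part.some (encode (Nat.Partrec.Code.const n)))
    (S : ℕ → Set ℕ) :
    k1 ∈ rAll fun y => rAll fun y' => rImp (S y) (rImp (E y y') (S y')) := by
  rw [mem_rAll]; intro y; rw [mem_rAll]; intro y'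
  refine rImp_intro fun n hn => ⟨encode (Nat.Partrec.Code.const n), ?_,
    by rw [hk1]; exact Part.mem_some _⟩
  refine rImp_intro fun m hm => ?_
  obtain ⟨rfl, -⟩ := mem_E.1 hm
  exact ⟨n, hn, by rw [Phi_encode, eval_const]; exact Part.mem_some _⟩

lemma k1_unicE {k1 : ℕ}
    (hk1 : ∀ n : ℕ, Phi k1 n = Part.some (encode (Nat.Partrec.Code.const n)))
    (x : ℕ) :
    k1 ∈ rAll fun y => rAll fun y' => rImp (E x y) (rImp (E x y') (E y y')) := by
  rw [mem_rAll]; intro y; rw [mem_rAll]; intro y'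
  refine rImp_intro fun n hn => ⟨encode (Nat.Partrec.Code.const n), ?_,
    by rw [hk1]; exact Part.mem_some _⟩
  obtain ⟨h1, h3⟩ := mem_E.1 hn
  refine rImp_intro fun m hm => ?_
  obtain ⟨h2, -⟩ := mem_E.1 hm
  refine ⟨n, mem_E.2 ⟨h1.symm.trans h2, h3.trans h1⟩,
    by rw [Phi_encode, eval_const]; exact Part.mem_some _⟩

lemma id_rImp (A : Set ℕ) : encode Nat.Partrec.Code.id ∈ rImp A A :=
  rImp_intro fun n hn =>
    ⟨n, hn, by rw [Phi_encode, eval_id]; exact Part.mem_some _⟩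

lemma r_mem {k1 : ℕ}
    (hk1 : ∀ n : ℕ, Phi k1 n = Part.some (encode (Nat.Partrec.Code.const n)))
    (x : ℕ) :
    Nat.pair k1 (Nat.pair k1 (Nat.pair x
      (Nat.pair (encode Nat.Partrec.Code.id) (encode Nat.Partrec.Code.id)))) ∈
      elEq E (el E x) (el E x) := by
  refine rAnd_intro ?_ (rAnd_intro ?_ (rAnd_intro ?_ ?_))
  · exact k1_stab hk1 (E x)
  · exact k1_unicE hk1 x
  · exact Set.mem_iUnion.2 ⟨x, E_self x⟩
  · rw [mem_rAll]; intro y; exact rAnd_intro (id_rImp _) (id_rImp _)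

lemma unic_apply {S : ℕ → Set ℕ} {u : ℕ}
    (hu : u ∈ rAll fun a => rAll fun b => rImp (S a) (rImp (S b) (E a b)))
    {y y' n n' : ℕ} (hn : n ∈ S y) (hn' : n' ∈ S y') :
    y = y' ∧ ∃ v ∈ Phi u n, ∃ w ∈ Phi v n', w = y := by
  have h := mem_rAll.1 (mem_rAll.1 hu y) y'
  obtain ⟨v, hv, hvm⟩ := rImp_elim h hn
  obtain ⟨w, hw, hwm⟩ := rImp_elim hv hn'
  obtain ⟨hyy, hwy⟩ := mem_E.1 hw
  exact ⟨hyy, v, hvm, w, hwm, hwy⟩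

end ProgExtract

end ProgExtractAux

open Nat.Partrec.Code Encodable ProgExtract in
theorem program_extraction
    (f : (ℕ → Set ℕ) → (ℕ → Set ℕ))
    (hf : (rAll fun u : ℕ → Set ℕ => rAll fun u' : ℕ → Set ℕ =>
      rImp (elEq E u u') (elEq E (f u) (f u'))).Nonempty) :
    ∃ g : ℕ → ℕ,
      (((rAll fun x : ℕ => rImp (E x x)
          (elEq E (f (el E x)) (el E (g x)))).Nonempty)
        ∧ Computable g)
      ∧ ∀ g' : ℕ → ℕ,
          (rAll fun x : ℕ => rImp (E x x)
            (elEq E (f (el E x)) (el E (g' x)))).Nonempty → g' = g := by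
  classical
  obtain ⟨ra, hra⟩ := hf
  obtain ⟨k1, hk1⟩ := ProgExtract.exists_k1
  -- the canonical reflexivity realiser
  have hr : ∀ x : ℕ, Nat.pair k1 (Nat.pair k1 (Nat.pair x
      (Nat.pair (encode Code.id) (encode Code.id)))) ∈ elEq E (el E x) (el E x) :=
    fun x => r_mem hk1 x
  set r : ℕ → ℕ := fun x => Nat.pair k1 (Nat.pair k1 (Nat.pair x
      (Nat.pair (encode Code.id) (encode Code.id)))) with hrdef
  have key : ∀ x : ℕ, ∃ m ∈ elEq E (f (el E x)) (f (el E x)), m ∈ Phi ra (r x) := by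
    intro x
    have h1 := mem_rAll.1 (mem_rAll.1 hra (el E x)) (el E x)
    exact rImp_elim h1 (hr x)
  choose mfun hmE hmPhi using key
  have hdec := fun x => elEq_decomp (hmE x)
  have hUm : ∀ x, (mfun x).unpair.2.unpair.1 ∈
      rAll fun a => rAll fun b =>
        rImp (f (el E x) a) (rImp (f (el E x) b) (E a b)) := fun x => (hdec x).1
  have hCm : ∀ x, ∃ y, (mfun x).unpair.2.unpair.2.unpair.1 ∈ f (el E x) y :=
    fun x => Set.mem_iUnion.1 (hdec x).2.1
  choose Y hY using hCm
  -- uniqueness of the witness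
  have huniq : ∀ x y y', (f (el E x) y).Nonempty → (f (el E x) y').Nonempty → y = y' := by
    intro x y y' h h'
    obtain ⟨n, hn⟩ := h
    obtain ⟨n', hn'⟩ := h'
    exact (unic_apply (hUm x) hn hn').1
  -- the partial recursive function computing Y
  set G : ℕ →. ℕ := fun x =>
    (Phi ra (r x)).bind fun m =>
      (Phi m.unpair.2.unpair.1 m.unpair.2.unpair.2.unpair.1).bind fun v =>
        Phi v m.unpair.2.unpair.2.unpair.1 with hGdef
  have hYG : ∀ x, Y x ∈ G x := by
    intro x
    obtain ⟨-, v, hv, w, hw, hwy⟩ := unic_apply (hUm x) (hY x) (hY x)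
    exact Part.mem_bind_iff.2 ⟨mfun x, hmPhi x,
      Part.mem_bind_iff.2 ⟨v, hv, hwy ▸ hw⟩⟩
  -- computability
  have hPhi2 : Partrec₂ Phi :=
    Code.eval_part.comp ((Computable.ofNat Code).comp Computable.fst) Computable.snd
  have pu : Primrec fun m : ℕ => m.unpair.2.unpair.1 :=
    Primrec.fst.comp (Primrec.unpair.comp (Primrec.snd.comp Primrec.unpair))
  have pc : Primrec fun m : ℕ => m.unpair.2.unpair.2.unpair.1 :=
    Primrec.fst.comp (Primrec.unpair.comp
      (Primrec.snd.comp (Primrec.unpair.comp (Primrec.snd.comp Primrec.unpair))))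
  have hrc : Computable r := by
    have : Primrec r :=
      Primrec₂.natPair.comp (Primrec.const k1)
        (Primrec₂.natPair.comp (Primrec.const k1)
          (Primrec₂.natPair.comp Primrec.id (Primrec.const _)))
    exact this.to_comp
  have hGpr : Partrec G := by
    refine Partrec.bind (hPhi2.comp (Computable.const ra) hrc) ?_
    refine Partrec.bind
      (hPhi2.comp (pu.to_comp.comp Computable.snd) (pc.to_comp.comp Computable.snd)) ?_
    exact hPhi2.comp Computable.snd
      (pc.to_comp.comp (Computable.snd.comp Computable.fst))
  have hYcomp : Computable Y := Partrec.of_eq_tot hGpr hYG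
  -- the code B for composition
  obtain ⟨B, hB⟩ : ∃ B : Code, ∀ k : ℕ, B.eval k =
      (Phi k.unpair.1.unpair.1 k.unpair.2).bind fun v => Phi v k.unpair.1.unpair.2 := by
    have hpp : Partrec fun k : ℕ =>
        (Phi k.unpair.1.unpair.1 k.unpair.2).bind fun v => Phi v k.unpair.1.unpair.2 := by
      refine Partrec.bind (hPhi2.comp ?_ ?_) ?_
      · exact (Primrec.fst.comp (Primrec.unpair.comp
          (Primrec.fst.comp Primrec.unpair))).to_comp
      · exact (Primrec.snd.comp Primrec.unpair).to_comp
      · exact hPhi2.comp Computable.snd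
          ((Primrec.snd.comp (Primrec.unpair.comp
            (Primrec.fst.comp (Primrec.unpair.comp Primrec.fst)))).to_comp)
    obtain ⟨B, hB⟩ := Code.exists_code.1 (Partrec.nat_iff.1 hpp)
    exact ⟨B, fun k => by rw [hB]⟩
  -- the extracted-program realiser
  set P : ℕ → ℕ := fun m => Nat.pair k1 (Nat.pair m.unpair.2.unpair.1
      (Nat.pair m.unpair.2.unpair.2.unpair.1
        (Nat.pair (encode (B.curry (Nat.pair m.unpair.2.unpair.1 m.unpair.2.unpair.2.unpair.1)))
          (encode (Code.const m.unpair.2.unpair.2.unpair.1))))) with hPdef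
  have hPprim : Primrec P := by
    refine Primrec₂.natPair.comp (Primrec.const k1) (Primrec₂.natPair.comp pu
      (Primrec₂.natPair.comp pc (Primrec₂.natPair.comp ?_ ?_)))
    · exact Primrec.encode.comp (Code.primrec₂_curry.comp (Primrec.const B)
        (Primrec₂.natPair.comp pu pc))
    · exact Primrec.encode.comp (Code.primrec_const.comp pc)
  obtain ⟨ce, hce⟩ : ∃ ce : Code, ∀ n : ℕ, ce.eval n = (Phi ra (r n)).map P := by
    have hpp : Partrec fun n : ℕ => (Phi ra (r n)).map P := by
      refine Partrec.map (hPhi2.comp (Computable.const ra) hrc) ?_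
      exact (hPprim.to_comp.comp Computable.snd : Computable fun p : ℕ × ℕ => P p.2)
    obtain ⟨ce, hce⟩ := Code.exists_code.1 (Partrec.nat_iff.1 hpp)
    exact ⟨ce, fun n => by rw [hce]⟩
  have hreal : (rAll fun x : ℕ => rImp (E x x)
      (elEq E (f (el E x)) (el E (Y x)))).Nonempty := by
    refine ⟨encode ce, mem_rAll.2 fun x => rImp_intro fun n hn => ?_⟩
    obtain ⟨-, h0⟩ := mem_E.1 hn
    refine ⟨P (mfun x), ?_, ?_⟩
    · show Nat.pair k1 (Nat.pair (mfun x).unpair.2.unpair.1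
        (Nat.pair (mfun x).unpair.2.unpair.2.unpair.1
          (Nat.pair (encode (B.curry (Nat.pair (mfun x).unpair.2.unpair.1
              (mfun x).unpair.2.unpair.2.unpair.1)))
            (encode (Code.const (mfun x).unpair.2.unpair.2.unpair.1))))) ∈
        elEq E (f (el E x)) (el E (Y x))
      refine rAnd_intro (k1_stab hk1 (f (el E x)))
        (rAnd_intro (hUm x) (rAnd_intro (hdec x).2.1 (mem_rAll.2 fun y => ?_)))
      refine rAnd_intro ?_ ?_
      · -- forward implication
        refine rImp_intro fun n' hn' => ?_
        obtain ⟨hyY, v, hv, w, hw, hwy⟩ := unic_apply (hUm x) hn' (hY x)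
        refine ⟨w, mem_E.2 ⟨hyY.symm, hwy.trans hyY⟩, ?_⟩
        rw [Phi_encode, Code.eval_curry, hB]
        simp only [Nat.unpair_pair]
        exact Part.mem_bind_iff.2 ⟨v, hv, hw⟩
      · -- backward implication
        refine rImp_intro fun m' hm' => ?_
        obtain ⟨h1, -⟩ := mem_E.1 hm'
        exact ⟨(mfun x).unpair.2.unpair.2.unpair.1, h1 ▸ hY x,
          by rw [Phi_encode, Code.eval_const]; exact Part.mem_some _⟩
    · rw [h0, Phi_encode, hce]
      exact Part.mem_map P (hmPhi x)
  refine ⟨Y, ⟨hreal, hYcomp⟩, ?_⟩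
  rintro g' ⟨e', he'⟩
  funext x
  obtain ⟨m', hm', -⟩ := rImp_elim (mem_rAll.1 he' x) (E_self x)
  obtain ⟨-, hc', hiff'⟩ := elEq_decomp hm'
  obtain ⟨y', hy'⟩ := Set.mem_iUnion.1 hc'
  have hp := (rAnd_unpair (mem_rAll.1 hiff' y')).1
  obtain ⟨w, hw, -⟩ := rImp_elim hp hy'
  obtain ⟨h1, -⟩ := mem_E.1 hw
  have h2 : y' = Y x := huniq x y' (Y x) ⟨_, hy'⟩ ⟨_, hY x⟩
  rw [h1, h2]
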